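/- Let V be a variety with right existentially definable factor congruences (RexDFC). Suppose that for every A ∈ V, every pair e⃗ ⋄_A f⃗ of complementary central elements of A, and every congruence γ of A, the images e⃗/γ and f⃗/γ are complementary central elements of the quotient A/γ. Then V has the Fraser–Horn property: for all A, B ∈ V and every congruence γ of A×B there are congruences γ₁ of A and γ₂ of B with γ = γ₁×γ₂, where γ₁×γ₂ = {((a,b),(c,d)) : (a,c) ∈ γ₁ and (b,d) ∈ γ₂}. -/
import Mathlib


open FirstOrder FirstOrder.Language FirstOrder.Language.Structure

universe u v w

namespace Paper

variable {L : FirstOrder.Language.{0, 0}}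

/-- A congruence on an `L`-algebra: an equivalence relation compatible with all operations. -/
structure AlgCon (L : FirstOrder.Language.{0, 0}) (A : Type u) [L.Structure A] where
  r : A → A → Prop
  refl : ∀ a, r a a
  symm : ∀ {a b}, r a b → r b a
  trans : ∀ {a b c}, r a b → r b c → r a c
  compat : ∀ {m : ℕ} (f : L.Functions m) (x y : Fin m → A),
    (∀ i, r (x i) (y i)) → r (funMap f x) (funMap f y)

namespace AlgCon

variable {A : Type u} [L.Structure A]

theorem ext' {c d : AlgCon L A} (h : ∀ a b, c.r a b ↔ d.r a b) : c = d := by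
  cases c; cases d
  simp only [AlgCon.mk.injEq]
  funext a b
  exact propext (h a b)

/-- The identity (diagonal) congruence Δ. -/
def delta (L : FirstOrder.Language.{0, 0}) (A : Type u) [L.Structure A] : AlgCon L A where
  r := Eq
  refl := fun _ => rfl
  symm := fun h => h.symm
  trans := fun h1 h2 => h1.trans h2
  compat := fun f x y h => by rw [funext h]

/-- The universal congruence ∇. -/
def nabla (L : FirstOrder.Language.{0, 0}) (A : Type u) [L.Structure A] : AlgCon L A where
  r := fun _ _ => True
  refl := fun _ => trivial
  symm := fun _ => trivial
  trans := fun _ _ => trivial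
  compat := fun _ _ _ _ => trivial

/-- Meet (intersection) of congruences. -/
def inf (c d : AlgCon L A) : AlgCon L A where
  r := fun a b => c.r a b ∧ d.r a b
  refl := fun a => ⟨c.refl a, d.refl a⟩
  symm := fun h => ⟨c.symm h.1, d.symm h.2⟩
  trans := fun h1 h2 => ⟨c.trans h1.1 h2.1, d.trans h1.2 h2.2⟩
  compat := fun f x y h =>
    ⟨c.compat f x y fun i => (h i).1, d.compat f x y fun i => (h i).2⟩

/-- Relational composition of congruences (as a binary relation). -/
def comp (c d : AlgCon L A) (a b : A) : Prop := ∃ z, c.r a z ∧ d.r z b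

/-- The congruence generated by a binary relation. -/
def conGen (L : FirstOrder.Language.{0, 0}) {A : Type u} [L.Structure A]
    (R : A → A → Prop) : AlgCon L A where
  r := fun a b => ∀ c : AlgCon L A, (∀ x y, R x y → c.r x y) → c.r a b
  refl := fun a _ _ => AlgCon.refl _ a
  symm := fun h c hc => c.symm (h c hc)
  trans := fun h1 h2 c hc => c.trans (h1 c hc) (h2 c hc)
  compat := fun f x y h c hc => c.compat f x y fun i => h i c hc

/-- Join of congruences in the congruence lattice. -/
def sup (c d : AlgCon L A) : AlgCon L A :=
  conGen L (fun a b => c.r a b ∨ d.r a b)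

end AlgCon

/-- The principal congruence θ(a⃗, b⃗) generated by the pairs (aᵢ, bᵢ). -/
def thetaPairs {A : Type u} [L.Structure A] {n : ℕ} (a b : Fin n → A) : AlgCon L A :=
  AlgCon.conGen L (fun x y => ∃ i, x = a i ∧ y = b i)

/-- The congruence θ(S) generated by S × S. -/
def thetaSet {A : Type u} [L.Structure A] (S : Set A) : AlgCon L A :=
  AlgCon.conGen L (fun x y => x ∈ S ∧ y ∈ S)

/-- `[a⃗, b⃗] ∈ θ`: all pairs (aᵢ, bᵢ) belong to the congruence θ. -/
def inCon {A : Type u} [L.Structure A] {n : ℕ} (θ : AlgCon L A) (a b : Fin n → A) : Prop :=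
  ∀ i, θ.r (a i) (b i)

/-- θ and δ are complementary factor congruences: θ ∩ δ = Δ and θ ∘ δ = ∇. -/
def IsComplFC {A : Type u} [L.Structure A] (θ δ : AlgCon L A) : Prop :=
  θ.inf δ = AlgCon.delta L A ∧ ∀ a b : A, θ.comp δ a b

/-- The set of factor congruences of `A`. -/
def FC (L : FirstOrder.Language.{0, 0}) (A : Type u) [L.Structure A] : Set (AlgCon L A) :=
  {θ | ∃ δ, IsComplFC θ δ}

/-- `S` is a Boolean sublattice of the congruence lattice of `A`: it contains Δ and ∇,
is closed under meet and join, is distributive, and every element has a complement in `S`. -/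
def IsBooleanSublattice {A : Type u} [L.Structure A] (S : Set (AlgCon L A)) : Prop :=
  AlgCon.delta L A ∈ S ∧ AlgCon.nabla L A ∈ S ∧
  (∀ θ ∈ S, ∀ δ ∈ S, θ.inf δ ∈ S) ∧
  (∀ θ ∈ S, ∀ δ ∈ S, θ.sup δ ∈ S) ∧
  (∀ θ ∈ S, ∀ δ ∈ S, ∀ γ ∈ S, θ.inf (δ.sup γ) = (θ.inf δ).sup (θ.inf γ)) ∧
  (∀ θ ∈ S, ∃ δ ∈ S, θ.inf δ = AlgCon.delta L A ∧ θ.sup δ = AlgCon.nabla L A)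

/-- An identity (equation between two terms in finitely many variables). -/
structure Identity (L : FirstOrder.Language.{0, 0}) where
  nvars : ℕ
  lhs : L.Term (Fin nvars)
  rhs : L.Term (Fin nvars)

/-- An identity holds in an algebra. -/
def Identity.Holds (e : Identity L) (A : Type u) [L.Structure A] : Prop :=
  ∀ v : Fin e.nvars → A, e.lhs.realize v = e.rhs.realize v

/-- Membership of an algebra in the variety axiomatized by the set of identities `E`. -/
def InVariety (E : Set (Identity L)) (A : Type u) [L.Structure A] : Prop :=
  ∀ e ∈ E, e.Holds A

/-- The data of the closed terms 0₁, …, 0ₙ and 1₁, …, 1ₙ. -/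
structure ZeroOneData (L : FirstOrder.Language.{0, 0}) where
  n : ℕ
  npos : 0 < n
  zero : Fin n → L.Term Empty
  one : Fin n → L.Term Empty

/-- The interpretation of the tuple 0⃗ in an algebra. -/
def ZeroOneData.zeroA (Z : ZeroOneData L) (A : Type u) [L.Structure A] : Fin Z.n → A :=
  fun i => (Z.zero i).realize Empty.elim

/-- The interpretation of the tuple 1⃗ in an algebra. -/
def ZeroOneData.oneA (Z : ZeroOneData L) (A : Type u) [L.Structure A] : Fin Z.n → A :=
  fun i => (Z.one i).realize Empty.elim

/-- `V ⊨ (0⃗ ≈ 1⃗) → x ≈ y`: `V` is a variety with 0⃗ and 1⃗. -/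
def ZeroOneData.Separates (Z : ZeroOneData L) (E : Set (Identity L)) : Prop :=
  ∀ (A : Type u) [L.Structure A], InVariety E A →
    (∀ i, Z.zeroA A i = Z.oneA A i) → Subsingleton A

/-- Product structure on `A × B`. -/
instance prodStructure (A : Type u) (B : Type u) [L.Structure A] [L.Structure B] :
    L.Structure (A × B) where
  funMap := fun f x => (funMap f (fun i => (x i).1), funMap f (fun i => (x i).2))
  RelMap := fun r x => RelMap r (fun i => (x i).1) ∧ RelMap r (fun i => (x i).2)

/-- A witness that `e⃗` is a central element of `A`: an isomorphism
`τ : A ≅ A₁ × A₂` with `A₁, A₂ ∈ V` and `τ(e⃗) = [0⃗, 1⃗]`. -/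
structure CentralWitness (E : Set (Identity L)) (Z : ZeroOneData L)
    (A : Type u) [L.Structure A] (e : Fin Z.n → A) : Type (u + 1) where
  A₁ : Type u
  A₂ : Type u
  [s₁ : L.Structure A₁]
  [s₂ : L.Structure A₂]
  mem₁ : InVariety E A₁
  mem₂ : InVariety E A₂
  iso : A ≃[L] (A₁ × A₂)
  he : ∀ i, iso (e i) = (Z.zeroA A₁ i, Z.oneA A₂ i)

/-- A witness that `e⃗` and `f⃗` are complementary central elements of `A`. -/
structure ComplCentralWitness (E : Set (Identity L)) (Z : ZeroOneData L)
    (A : Type u) [L.Structure A] (e f : Fin Z.n → A) extends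
    CentralWitness E Z A e : Type (u + 1) where
  hf : ∀ i, iso (f i) = (Z.oneA A₁ i, Z.zeroA A₂ i)

/-- `e⃗` is a central element of `A`. -/
def IsCentral (E : Set (Identity L)) (Z : ZeroOneData L)
    (A : Type u) [L.Structure A] (e : Fin Z.n → A) : Prop :=
  Nonempty (CentralWitness E Z A e)

/-- `e⃗ ⋄_A f⃗`: `e⃗` and `f⃗` are complementary central elements of `A`. -/
def CentDiamond (E : Set (Identity L)) (Z : ZeroOneData L)
    (A : Type u) [L.Structure A] (e f : Fin Z.n → A) : Prop :=
  Nonempty (ComplCentralWitness E Z A e f)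

/-- `V` has Boolean factor congruences: for every `A ∈ V`, `FC(A)` is a Boolean
sublattice of `Con(A)`. -/
def HasBFC (E : Set (Identity L)) : Prop :=
  ∀ (A : Type u) [L.Structure A], InVariety E A → IsBooleanSublattice (FC L A)

/-- `V` is stable by complements: every homomorphism between members of `V`
preserves complementary central elements. -/
def StableByComplements (E : Set (Identity L)) (Z : ZeroOneData L) : Prop :=
  ∀ (A B : Type u) [L.Structure A] [L.Structure B], InVariety E A → InVariety E B →
    ∀ (f : A →[L] B) (e g : Fin Z.n → A), CentDiamond E Z A e g →
      CentDiamond E Z B (fun i => f (e i)) (fun i => f (g i))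

/-- A formula is existential: of the form ∃w⃗ ψ with ψ quantifier-free. -/
def IsExistentialForm {α : Type*} (φ : L.Formula α) : Prop :=
  ∃ (m : ℕ) (ψ : L.BoundedFormula α m), ψ.IsQF ∧ φ = ψ.exs

/-- The formula λ(z⃗, x, y) satisfies the condition (R): for all `A, B ∈ V`,
`A × B ⊨ λ([0⃗,1⃗], (a,c), (b,d))` iff `c = d`. -/
def RightFormulaWorks (E : Set (Identity L)) (Z : ZeroOneData L)
    (φ : L.Formula ((Fin Z.n) ⊕ (Fin 2))) : Prop :=
  ∀ (A B : Type u) [L.Structure A] [L.Structure B], InVariety E A → InVariety E B →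
    ∀ (a b : A) (c d : B),
      (φ.Realize (M := A × B)
        (Sum.elim (fun i => (Z.zeroA A i, Z.oneA B i)) ![(a, c), (b, d)]) ↔ c = d)

/-- The formula ρ(z⃗, x, y) satisfies the condition (L): for all `A, B ∈ V`,
`A × B ⊨ ρ([0⃗,1⃗], (a,c), (b,d))` iff `a = b`. -/
def LeftFormulaWorks (E : Set (Identity L)) (Z : ZeroOneData L)
    (φ : L.Formula ((Fin Z.n) ⊕ (Fin 2))) : Prop :=
  ∀ (A B : Type u) [L.Structure A] [L.Structure B], InVariety E A → InVariety E B →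
    ∀ (a b : A) (c d : B),
      (φ.Realize (M := A × B)
        (Sum.elim (fun i => (Z.zeroA A i, Z.oneA B i)) ![(a, c), (b, d)]) ↔ a = b)

/-- `V` has right existentially definable factor congruences. -/
def HasRexDFC (E : Set (Identity L)) (Z : ZeroOneData L) : Prop :=
  HasBFC.{u} E ∧ ∃ φ : L.Formula ((Fin Z.n) ⊕ (Fin 2)),
    IsExistentialForm φ ∧ RightFormulaWorks.{u} E Z φ

/-- `V` has left existentially definable factor congruences. -/
def HasLexDFC (E : Set (Identity L)) (Z : ZeroOneData L) : Prop :=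
  HasBFC.{u} E ∧ ∃ φ : L.Formula ((Fin Z.n) ⊕ (Fin 2)),
    IsExistentialForm φ ∧ LeftFormulaWorks.{u} E Z φ

/-- `(θ, δ)` is the pair of complementary factor congruences associated with the
central element `e⃗`, i.e. `θ ⋄ δ`, `[e⃗,0⃗] ∈ θ` and `[e⃗,1⃗] ∈ δ`. -/
def PairFor (Z : ZeroOneData L) (A : Type u) [L.Structure A]
    (e : Fin Z.n → A) (θ δ : AlgCon L A) : Prop :=
  IsComplFC θ δ ∧ inCon θ e (Z.zeroA A) ∧ inCon δ e (Z.oneA A)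

/-- `a⃗ = e⃗ ∧ f⃗` in the center: `[a⃗,0⃗] ∈ θ_{0,e} ∩ θ_{0,f}` and `[a⃗,1⃗] ∈ θ_{1,e} ∨ θ_{1,f}`. -/
def IsMeetOf (Z : ZeroOneData L) (A : Type u) [L.Structure A]
    (e f a : Fin Z.n → A) : Prop :=
  ∃ θ₀e θ₁e θ₀f θ₁f : AlgCon L A, PairFor Z A e θ₀e θ₁e ∧ PairFor Z A f θ₀f θ₁f ∧
    inCon (θ₀e.inf θ₀f) a (Z.zeroA A) ∧ inCon (θ₁e.sup θ₁f) a (Z.oneA A)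

/-- `a⃗ = e⃗ ∨ f⃗` in the center: `[a⃗,0⃗] ∈ θ_{0,e} ∨ θ_{0,f}` and `[a⃗,1⃗] ∈ θ_{1,e} ∩ θ_{1,f}`. -/
def IsJoinOf (Z : ZeroOneData L) (A : Type u) [L.Structure A]
    (e f a : Fin Z.n → A) : Prop :=
  ∃ θ₀e θ₁e θ₀f θ₁f : AlgCon L A, PairFor Z A e θ₀e θ₁e ∧ PairFor Z A f θ₀f θ₁f ∧
    inCon (θ₀e.sup θ₀f) a (Z.zeroA A) ∧ inCon (θ₁e.inf θ₁f) a (Z.oneA A)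

/-- `a⃗ = e⃗^c` in the center: `[a⃗,1⃗] ∈ θ_{0,e}` and `[a⃗,0⃗] ∈ θ_{1,e}`. -/
def IsComplOf (Z : ZeroOneData L) (A : Type u) [L.Structure A]
    (e a : Fin Z.n → A) : Prop :=
  ∃ θ₀e θ₁e : AlgCon L A, PairFor Z A e θ₀e θ₁e ∧
    inCon θ₀e a (Z.oneA A) ∧ inCon θ₁e a (Z.zeroA A)

section Quotient

variable {A : Type u} [L.Structure A]

/-- The setoid underlying a congruence. -/
def AlgCon.setoid (c : AlgCon L A) : Setoid A :=
  ⟨c.r, ⟨c.refl, fun h => c.symm h, fun h1 h2 => c.trans h1 h2⟩⟩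

/-- The quotient algebra `A/θ`. -/
def ConQuot (c : AlgCon L A) : Type u := Quotient c.setoid

/-- The class of `a` in `A/θ`. -/
def ConQuot.mk (c : AlgCon L A) (a : A) : ConQuot c := Quotient.mk c.setoid a

noncomputable instance conQuotStructure (c : AlgCon L A) : L.Structure (ConQuot c) where
  funMap := fun f x => ConQuot.mk c (funMap f (fun i => (Quotient.out (α := A) (s := c.setoid) (x i))))
  RelMap := fun r x => ∃ as : Fin _ → A, (∀ i, ConQuot.mk c (as i) = x i) ∧ RelMap r as

theorem conQuot_funMap_mk (c : AlgCon L A) {m : ℕ} (f : L.Functions m) (as : Fin m → A) :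
    funMap f (fun i => ConQuot.mk c (as i)) = ConQuot.mk c (funMap f as) := by
  show ConQuot.mk c _ = ConQuot.mk c _
  apply Quotient.sound
  apply c.compat
  intro i
  exact Quotient.mk_out (s := c.setoid) (as i)

/-- The canonical quotient homomorphism `A → A/θ`. -/
def conQuotMk (c : AlgCon L A) : A →[L] ConQuot c where
  toFun := ConQuot.mk c
  map_fun' := fun f x => (conQuot_funMap_mk c f x).symm
  map_rel' := fun _r x h => ⟨x, fun _ => rfl, h⟩

end Quotient

end Paper



open Paper

section Aux

open Paper

variable {L : FirstOrder.Language.{0, 0}}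

theorem prod_term_realize {A B : Type u} [L.Structure A] [L.Structure B]
    {α : Type*} (t : L.Term α) (v : α → A × B) :
    t.realize v = (t.realize (fun a => (v a).1), t.realize (fun a => (v a).2)) := by
  induction t with
  | var a => rfl
  | func f ts ih =>
    show funMap f (fun i => (ts i).realize v) = _
    simp only [ih]
    rfl

theorem zeroA_prod (Z : ZeroOneData L) {A B : Type u} [L.Structure A] [L.Structure B]
    (i : Fin Z.n) : Z.zeroA (A × B) i = (Z.zeroA A i, Z.zeroA B i) := by
  show (Z.zero i).realize Empty.elim = _
  rw [prod_term_realize]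
  have h1 : (fun a : Empty => ((Empty.elim a : A × B)).1) = Empty.elim :=
    funext fun a => a.elim
  have h2 : (fun a : Empty => ((Empty.elim a : A × B)).2) = Empty.elim :=
    funext fun a => a.elim
  rw [h1, h2]
  rfl

theorem oneA_prod (Z : ZeroOneData L) {A B : Type u} [L.Structure A] [L.Structure B]
    (i : Fin Z.n) : Z.oneA (A × B) i = (Z.oneA A i, Z.oneA B i) := by
  show (Z.one i).realize Empty.elim = _
  rw [prod_term_realize]
  have h1 : (fun a : Empty => ((Empty.elim a : A × B)).1) = Empty.elim :=
    funext fun a => a.elim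
  have h2 : (fun a : Empty => ((Empty.elim a : A × B)).2) = Empty.elim :=
    funext fun a => a.elim
  rw [h1, h2]
  rfl

theorem inVariety_prod {E : Set (Identity L)} {A B : Type u} [L.Structure A] [L.Structure B]
    (hA : InVariety E A) (hB : InVariety E B) : InVariety E (A × B) := by
  intro e he v
  rw [prod_term_realize, prod_term_realize]
  rw [hA e he, hB e he]

variable [L.IsAlgebraic]

/-- Pairing of homomorphisms into a product. -/
def pairHom {P X Y : Type u} [L.Structure P] [L.Structure X] [L.Structure Y]
    (u : P →[L] X) (w : P →[L] Y) : P →[L] (X × Y) where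
  toFun p := (u p, w p)
  map_fun' f x := by
    show (u (funMap f x), w (funMap f x)) = funMap f (fun i => (u (x i), w (x i)))
    rw [HomClass.map_fun u f x, HomClass.map_fun w f x]
    rfl
  map_rel' r _ _ := isEmptyElim r

/-- First projection as a homomorphism. -/
def fstHom {X Y : Type u} [L.Structure X] [L.Structure Y] : (X × Y) →[L] X where
  toFun := Prod.fst
  map_fun' _ _ := rfl
  map_rel' r _ _ := isEmptyElim r

/-- Second projection as a homomorphism. -/
def sndHom {X Y : Type u} [L.Structure X] [L.Structure Y] : (X × Y) →[L] Y where
  toFun := Prod.snd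
  map_fun' _ _ := rfl
  map_rel' r _ _ := isEmptyElim r

/-- Swap of a product as a homomorphism. -/
def swapHom {X Y : Type u} [L.Structure X] [L.Structure Y] : (X × Y) →[L] (Y × X) where
  toFun := Prod.swap
  map_fun' _ _ := rfl
  map_rel' r _ _ := isEmptyElim r

@[simp] theorem pairHom_apply {P X Y : Type u} [L.Structure P] [L.Structure X] [L.Structure Y]
    (u : P →[L] X) (w : P →[L] Y) (p : P) : pairHom u w p = (u p, w p) := rfl

theorem qf_realize_injhom {M N : Type u} [L.Structure M] [L.Structure N]
    (h : M →[L] N) (hinj : Function.Injective h) {α : Type*} {k : ℕ}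
    {ψ : L.BoundedFormula α k} (hqf : ψ.IsQF) (v : α → M) (xs : Fin k → M) :
    ψ.Realize (h ∘ v) (h ∘ xs) ↔ ψ.Realize v xs := by
  induction hqf with
  | falsum => rfl
  | of_isAtomic ha =>
    cases ha with
    | equal t₁ t₂ =>
      rw [BoundedFormula.realize_bdEqual, BoundedFormula.realize_bdEqual]
      have hc : Sum.elim (h ∘ v) (h ∘ xs) = h ∘ Sum.elim v xs := by
        funext x; cases x <;> rfl
      rw [hc, HomClass.realize_term, HomClass.realize_term]
      exact hinj.eq_iff
    | rel R ts => exact isEmptyElim R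
  | imp _ _ ih1 ih2 =>
    rw [BoundedFormula.realize_imp, BoundedFormula.realize_imp, ih1, ih2]

theorem exs_realize_injhom {M N : Type u} [L.Structure M] [L.Structure N]
    (h : M →[L] N) (hinj : Function.Injective h) {α : Type*} {m : ℕ}
    {ψ : L.BoundedFormula α m} (hqf : ψ.IsQF) {v : α → M}
    (hr : ψ.exs.Realize v) : ψ.exs.Realize (h ∘ v) := by
  rw [BoundedFormula.realize_exs] at hr ⊢
  obtain ⟨xs, hxs⟩ := hr
  exact ⟨h ∘ xs, (qf_realize_injhom h hinj hqf v xs).2 hxs⟩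

end Aux



/-- If a variety with RexDFC is such that complementary central
elements stay complementary central in every quotient, then it has the
Fraser–Horn property. -/
theorem statement5 (L : FirstOrder.Language.{0, 0}) [L.IsAlgebraic]
    [Finite (Σ n, L.Functions n)]
    (E : Set (Identity L)) (Z : ZeroOneData L)
    (hsep : ZeroOneData.Separates.{u} Z E) (hrex : HasRexDFC.{u} E Z)
    (hquot : ∀ (A : Type u) [L.Structure A], InVariety E A →
      ∀ e f : Fin Z.n → A, CentDiamond E Z A e f →
        ∀ γ : AlgCon L A,
          CentDiamond E Z (ConQuot γ)
            (fun i => ConQuot.mk γ (e i)) (fun i => ConQuot.mk γ (f i))) :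
    ∀ (A B : Type u) [L.Structure A] [L.Structure B],
      InVariety E A → InVariety E B →
      ∀ γ : AlgCon L (A × B), ∃ (γ₁ : AlgCon L A) (γ₂ : AlgCon L B),
        ∀ p q : A × B, γ.r p q ↔ γ₁.r p.1 q.1 ∧ γ₂.r p.2 q.2 := by
  classical
  obtain ⟨-, lam, ⟨m, ψ, hqf, rfl⟩, hφ⟩ := hrex
  intro A B iA iB hA hB γ
  by_cases hAne : Nonempty A
  case neg =>
    have : IsEmpty A := not_nonempty_iff.mp hAne
    exact ⟨AlgCon.delta L A, AlgCon.delta L B, fun p q => isEmptyElim p.1⟩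
  by_cases hBne : Nonempty B
  case neg =>
    have : IsEmpty B := not_nonempty_iff.mp hBne
    exact ⟨AlgCon.delta L A, AlgCon.delta L B, fun p q => isEmptyElim p.2⟩
  obtain ⟨a₀⟩ := hAne
  obtain ⟨b₀⟩ := hBne
  set e : Fin Z.n → A × B := fun i => (Z.zeroA A i, Z.oneA B i) with he_def
  set f : Fin Z.n → A × B := fun i => (Z.oneA A i, Z.zeroA B i) with hf_def
  have hAB : InVariety E (A × B) := inVariety_prod hA hB
  have hcd : CentDiamond E Z (A × B) e f :=
    ⟨{ A₁ := A, A₂ := B, s₁ := iA, s₂ := iB, mem₁ := hA, mem₂ := hB,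
       iso := FirstOrder.Language.Equiv.refl L (A × B),
       he := fun i => rfl, hf := fun i => rfl }⟩
  obtain ⟨w⟩ := hquot (A × B) hAB e f hcd γ
  letI : L.Structure w.A₁ := w.s₁
  letI : L.Structure w.A₂ := w.s₂
  let g : (A × B) →[L] w.A₁ × w.A₂ := w.iso.toHom.comp (conQuotMk γ)
  have hker : ∀ p q : A × B, g p = g q ↔ γ.r p q := by
    intro p q
    constructor
    · intro hpq
      have h2 : ConQuot.mk γ p = ConQuot.mk γ q := w.iso.injective hpq
      exact Quotient.exact h2
    · intro hpq
      show w.iso (ConQuot.mk γ p) = w.iso (ConQuot.mk γ q)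
      exact congrArg _ (Quotient.sound hpq)
  have hge : ∀ i, g (e i) = (Z.zeroA w.A₁ i, Z.oneA w.A₂ i) := fun i => w.he i
  have hgf : ∀ i, g (f i) = (Z.oneA w.A₁ i, Z.zeroA w.A₂ i) := fun i => w.hf i
  -- the comparison embedding
  let k : (A × B) →[L] (A × w.A₁) × (B × w.A₂) :=
    pairHom (pairHom fstHom (fstHom.comp g)) (pairHom sndHom (sndHom.comp g))
  have hk : ∀ p : A × B, k p = ((p.1, (g p).1), (p.2, (g p).2)) := fun p => rfl
  have hkinj : Function.Injective k := by
    intro p q h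
    have h1 : p.1 = q.1 := congrArg (fun x => x.1.1) h
    have h2 : p.2 = q.2 := congrArg (fun x => x.2.1) h
    exact Prod.ext h1 h2
  have key2 : ∀ (a a' : A) (b : B), (g (a, b)).2 = (g (a', b)).2 := by
    intro a a' b
    have h0 : ψ.exs.Realize (M := A × B) (Sum.elim e ![(a, b), (a', b)]) :=
      (hφ A B hA hB a a' b b).2 rfl
    have h1 := exs_realize_injhom k hkinj hqf h0
    have hcomp : k ∘ (Sum.elim e ![(a, b), (a', b)]) =
        Sum.elim (fun i => (Z.zeroA (A × w.A₁) i, Z.oneA (B × w.A₂) i))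
          ![((a, (g (a, b)).1), (b, (g (a, b)).2)),
            ((a', (g (a', b)).1), (b, (g (a', b)).2))] := by
      funext x
      cases x with
      | inl i =>
        simp only [Sum.elim_inl]
        show k (e i) = _
        rw [hk, hge i, zeroA_prod Z, oneA_prod Z]
      | inr j => fin_cases j <;> rfl
    rw [hcomp] at h1
    have := (hφ (A × w.A₁) (B × w.A₂) (inVariety_prod hA w.mem₁) (inVariety_prod hB w.mem₂)
      (a, (g (a, b)).1) (a', (g (a', b)).1) (b, (g (a, b)).2) (b, (g (a', b)).2)).1 h1
    have h2 := congrArg Prod.snd this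
    exact h2
  have key1 : ∀ (a : A) (b b' : B), (g (a, b)).1 = (g (a, b')).1 := by
    intro a b b'
    let k' : (B × A) →[L] (B × w.A₂) × (A × w.A₁) := (swapHom.comp k).comp swapHom
    have hk' : ∀ (b1 : B) (a1 : A),
        k' (b1, a1) = ((b1, (g (a1, b1)).2), (a1, (g (a1, b1)).1)) := fun _ _ => rfl
    have hk'inj : Function.Injective k' := by
      intro p q h
      have h1 : p.1 = q.1 := congrArg (fun x => x.1.1) h
      have h2 : p.2 = q.2 := congrArg (fun x => x.2.1) h
      exact Prod.ext h1 h2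
    have h0 : ψ.exs.Realize (M := B × A)
        (Sum.elim (fun i => (Z.zeroA B i, Z.oneA A i)) ![(b, a), (b', a)]) :=
      (hφ B A hB hA b b' a a).2 rfl
    have h1 := exs_realize_injhom k' hk'inj hqf h0
    have hcomp : k' ∘ (Sum.elim (fun i => (Z.zeroA B i, Z.oneA A i)) ![(b, a), (b', a)]) =
        Sum.elim (fun i => (Z.zeroA (B × w.A₂) i, Z.oneA (A × w.A₁) i))
          ![((b, (g (a, b)).2), (a, (g (a, b)).1)),
            ((b', (g (a, b')).2), (a, (g (a, b')).1))] := by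
      funext x
      cases x with
      | inl i =>
        simp only [Sum.elim_inl]
        show k' (Z.zeroA B i, Z.oneA A i) = _
        rw [hk', show ((Z.oneA A i, Z.zeroA B i) : A × B) = f i from rfl, hgf i,
          zeroA_prod Z, oneA_prod Z]
      | inr j => fin_cases j <;> rfl
    rw [hcomp] at h1
    have := (hφ (B × w.A₂) (A × w.A₁) (inVariety_prod hB w.mem₂) (inVariety_prod hA w.mem₁)
      (b, (g (a, b)).2) (b', (g (a, b')).2) (a, (g (a, b)).1) (a, (g (a, b')).1)).1 h1
    have h2 := congrArg Prod.snd this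
    exact h2
  -- the two congruences
  have step1 : ∀ {l : ℕ} (fn : L.Functions l) (z : Fin l → A),
      (g (funMap fn z, b₀)).1 = funMap fn (fun i => (g (z i, b₀)).1) := by
    intro l fn z
    have h1 : (g (funMap fn z, b₀)).1 = (g (funMap fn z, funMap fn (fun _ => b₀))).1 :=
      key1 _ _ _
    have h2 : ((funMap fn z, funMap fn (fun _ : Fin l => b₀)) : A × B) =
        funMap fn (fun i => ((z i, b₀) : A × B)) := rfl
    rw [h1, h2, HomClass.map_fun g fn]
    rfl
  have step2 : ∀ {l : ℕ} (fn : L.Functions l) (z : Fin l → B),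
      (g (a₀, funMap fn z)).2 = funMap fn (fun i => (g (a₀, z i)).2) := by
    intro l fn z
    have h1 : (g (a₀, funMap fn z)).2 = (g (funMap fn (fun _ => a₀), funMap fn z)).2 :=
      key2 _ _ _
    have h2 : ((funMap fn (fun _ : Fin l => a₀), funMap fn z) : A × B) =
        funMap fn (fun i => ((a₀, z i) : A × B)) := rfl
    rw [h1, h2, HomClass.map_fun g fn]
    rfl
  refine ⟨{ r := fun a a' => (g (a, b₀)).1 = (g (a', b₀)).1,
            refl := fun _ => rfl, symm := Eq.symm, trans := Eq.trans,
            compat := ?_ },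
          { r := fun b b' => (g (a₀, b)).2 = (g (a₀, b')).2,
            refl := fun _ => rfl, symm := Eq.symm, trans := Eq.trans,
            compat := ?_ }, ?_⟩
  · intro l fn x y hxy
    rw [step1 fn x, step1 fn y]
    exact congrArg (funMap fn) (funext hxy)
  · intro l fn x y hxy
    rw [step2 fn x, step2 fn y]
    exact congrArg (funMap fn) (funext hxy)
  · intro p q
    rw [← hker p q]
    constructor
    · intro h
      constructor
      · show (g (p.1, b₀)).1 = (g (q.1, b₀)).1
        rw [← key1 p.1 p.2 b₀, ← key1 q.1 q.2 b₀]
        exact congrArg Prod.fst h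
      · show (g (a₀, p.2)).2 = (g (a₀, q.2)).2
        rw [← key2 p.1 a₀ p.2, ← key2 q.1 a₀ q.2]
        exact congrArg Prod.snd h
    · rintro ⟨h1, h2⟩
      apply Prod.ext
      · calc (g p).1 = (g (p.1, b₀)).1 := key1 p.1 p.2 b₀
          _ = (g (q.1, b₀)).1 := h1
          _ = (g q).1 := (key1 q.1 q.2 b₀).symm
      · calc (g p).2 = (g (a₀, p.2)).2 := key2 p.1 a₀ p.2
          _ = (g (a₀, q.2)).2 := h2
          _ = (g q).2 := (key2 q.1 a₀ q.2).symm
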